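/- For every compact set K contained in Ω, sup_{x∈K} |ρ_ε(x)| → 0 as ε → 0⁺. (Asymptotic electroneutrality of Poisson–Boltzmann equilibria when the anions have a uniform selective boundary condition and the cations have blocking boundary conditions.) -/

import Mathlib

open MeasureTheory Real Filter Set Topology

/-- The Laplacian: sum of second partial derivatives. -/
noncomputable def lap {d : ℕ} (f : EuclideanSpace ℝ (Fin d) → ℝ) (x : EuclideanSpace ℝ (Fin d)) : ℝ :=
  ∑ i : Fin d, fderiv ℝ (fun y => fderiv ℝ f y (EuclideanSpace.single i 1)) x (EuclideanSpace.single i 1)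



lemma deriv2_nonpos_at_localMax {g g' : ℝ → ℝ} {L a : ℝ} (ha : 0 < a)
    (hg : ∀ t ∈ Ioo (-a) a, HasDerivAt g (g' t) t)
    (h2 : HasDerivAt g' L 0) (hmax : IsLocalMax g 0) : L ≤ 0 := by
  by_contra hL
  push_neg at hL
  have h0 : g' 0 = 0 := hmax.hasDerivAt_eq_zero (hg 0 ⟨by linarith, ha⟩)
  -- slope of g' tends to L
  have hslope : Tendsto (fun t => g' t / t) (𝓝[≠] (0:ℝ)) (𝓝 L) := by
    have := hasDerivAt_iff_tendsto_slope.1 h2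
    simpa [slope_fun_def_field, h0] using this
  have hev : ∀ᶠ t in 𝓝[>] (0:ℝ), 0 < g' t := by
    have h1 : ∀ᶠ t in 𝓝[≠] (0:ℝ), 0 < g' t / t ∨ t < 0 := by
      filter_upwards [hslope.eventually (eventually_gt_nhds (by linarith : (0:ℝ) < L))] with t ht
      exact Or.inl ht
    have h2' : ∀ᶠ t in 𝓝[>] (0:ℝ), 0 < g' t / t ∨ t < 0 :=
      h1.filter_mono (nhdsWithin_mono _ (fun t ht => ne_of_gt ht))
    filter_upwards [h2', self_mem_nhdsWithin] with t ht ht0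
    rcases ht with h | h
    · have := mul_pos h (show (0:ℝ) < t from ht0)
      simpa [div_mul_cancel₀, ne_of_gt (show (0:ℝ) < t from ht0)] using this
    · linarith [show (0:ℝ) < t from ht0]
  have hle : ∀ᶠ t in 𝓝[>] (0:ℝ), g t ≤ g 0 :=
    (hmax.filter_mono nhdsWithin_le_nhds)
  have hlt : ∀ᶠ t in 𝓝[>] (0:ℝ), t < a :=
    eventually_nhdsWithin_of_eventually_nhds (eventually_lt_nhds ha)
  obtain ⟨b, hb, hsub⟩ := (mem_nhdsGT_iff_exists_Ioo_subset).1
    ((hev.and (hle.and hlt)).filter_mono le_rfl)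
  have hb0 : (0:ℝ) < b := hb
  have hb2 : b/2 ∈ Ioo (0:ℝ) b := ⟨by linarith, by linarith⟩
  obtain ⟨hg'b2, hgb2, hb2a⟩ := hsub hb2
  have hIccsub : Icc (0:ℝ) (b/2) ⊆ Ioo (-a) a := fun t ht =>
    ⟨by have := ht.1; linarith, by have := ht.2; linarith⟩
  have hcont : ContinuousOn g (Icc (0:ℝ) (b/2)) := fun t ht =>
    ((hg t (hIccsub ht)).continuousAt).continuousWithinAt
  have hmono : StrictMonoOn g (Icc (0:ℝ) (b/2)) := by
    apply strictMonoOn_of_deriv_pos (convex_Icc _ _) hcont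
    intro t ht
    rw [interior_Icc] at ht
    have ht' : t ∈ Ioo (0:ℝ) b := ⟨ht.1, by have := ht.2; linarith⟩
    have : deriv g t = g' t := (hg t (hIccsub ⟨le_of_lt ht.1, le_of_lt ht.2⟩)).deriv
    rw [this]
    exact (hsub ht').1
  have : g 0 < g (b/2) := hmono ⟨le_rfl, by linarith⟩ ⟨by linarith, le_rfl⟩ (by linarith)
  linarith

lemma diff_fderiv_apply {d : ℕ} {f : EuclideanSpace ℝ (Fin d) → ℝ} {Ω : Set (EuclideanSpace ℝ (Fin d))}
    (hΩ : IsOpen Ω) (hf : ContDiffOn ℝ 2 f Ω) {x : EuclideanSpace ℝ (Fin d)} (hx : x ∈ Ω)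
    (v : EuclideanSpace ℝ (Fin d)) :
    DifferentiableAt ℝ (fun y => fderiv ℝ f y v) x := by
  have h1 : ContDiffOn ℝ 1 (fderiv ℝ f) Ω := hf.fderiv_of_isOpen hΩ (by norm_num)
  have h2 : DifferentiableAt ℝ (fderiv ℝ f) x :=
    (h1.differentiableOn (by norm_num)).differentiableAt (hΩ.mem_nhds hx)
  exact h2.clm_apply (differentiableAt_const v)

lemma lap_nonpos_at_localMax {d : ℕ} {f : EuclideanSpace ℝ (Fin d) → ℝ}
    {Ω : Set (EuclideanSpace ℝ (Fin d))} (hΩ : IsOpen Ω) (hf : ContDiffOn ℝ 2 f Ω)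
    {x : EuclideanSpace ℝ (Fin d)} (hx : x ∈ Ω) (hmax : IsLocalMax f x) : lap f x ≤ 0 := by
  apply Finset.sum_nonpos
  intro i _
  set v := EuclideanSpace.single i (1:ℝ) with hv
  obtain ⟨a, ha, hball⟩ := Metric.isOpen_iff.1 hΩ x hx
  have hvnorm : ‖v‖ = 1 := by simp [hv, EuclideanSpace.norm_single]
  have hcurve : ∀ t : ℝ, HasDerivAt (fun s : ℝ => x + s • v) v t := by
    intro t
    simpa using (((hasDerivAt_id t).smul_const v).const_add x)
  have hmem : ∀ t ∈ Ioo (-a) a, x + t • v ∈ Ω := by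
    intro t ht
    apply hball
    have : dist (x + t • v) x = |t| := by
      rw [dist_eq_norm]
      simp [norm_smul, hvnorm]
    rw [Metric.mem_ball, this, abs_lt]
    exact ⟨ht.1, ht.2⟩
  have hgderiv : ∀ t ∈ Ioo (-a) a,
      HasDerivAt (fun s => f (x + s • v)) (fderiv ℝ f (x + t • v) v) t := by
    intro t ht
    have hdf : DifferentiableAt ℝ f (x + t • v) :=
      (hf.differentiableOn (by norm_num)).differentiableAt (hΩ.mem_nhds (hmem t ht))
    exact hdf.hasFDerivAt.comp_hasDerivAt t (hcurve t)
  have hdiff2 : DifferentiableAt ℝ (fun y => fderiv ℝ f y v) x := diff_fderiv_apply hΩ hf hx v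
  have h2 : HasDerivAt (fun t : ℝ => fderiv ℝ f (x + t • v) v)
      (fderiv ℝ (fun y => fderiv ℝ f y v) x v) 0 :=
    hdiff2.hasFDerivAt.comp_hasDerivAt_of_eq 0 (hcurve 0) (by simp)
  have hgmax : IsLocalMax (fun s : ℝ => f (x + s • v)) 0 := by
    have hcont : Continuous (fun s : ℝ => x + s • v) := by continuity
    have h0 : (fun s : ℝ => x + s • v) 0 = x := by simp
    have h : IsMaxFilter f (𝓝 x) ((fun s : ℝ => x + s • v) 0) := by rw [h0]; exact hmax
    have ht : Tendsto (fun s : ℝ => x + s • v) (𝓝 0) (𝓝 x) := by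
      simpa using hcont.tendsto 0
    exact IsMaxFilter.comp_tendsto (g := fun s : ℝ => x + s • v) h ht
  exact deriv2_nonpos_at_localMax ha hgderiv h2 hgmax


section coord
variable {d : ℕ} (φ φ' : ℝ → ℝ) (c : ℝ) (j : Fin d) (x v : EuclideanSpace ℝ (Fin d))

lemma hasFDerivAt_coord (hφ : ∀ t, HasDerivAt φ (φ' t) t) :
    HasFDerivAt (fun y : EuclideanSpace ℝ (Fin d) => φ (y j - c))
      (φ' (x j - c) • (EuclideanSpace.proj j : EuclideanSpace ℝ (Fin d) →L[ℝ] ℝ)) x := by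
  have h1 : HasFDerivAt (fun y : EuclideanSpace ℝ (Fin d) => y j - c)
      (EuclideanSpace.proj j : EuclideanSpace ℝ (Fin d) →L[ℝ] ℝ) x := by
    have := ((EuclideanSpace.proj (𝕜 := ℝ) j).hasFDerivAt (x := x)).sub_const c
    simpa using this
  exact (hφ (x j - c)).comp_hasFDerivAt x h1

lemma fderiv_coord_apply (hφ : ∀ t, HasDerivAt φ (φ' t) t) :
    fderiv ℝ (fun y : EuclideanSpace ℝ (Fin d) => φ (y j - c)) x v = φ' (x j - c) * v j := by
  rw [(hasFDerivAt_coord φ φ' c j x hφ).fderiv]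
  simp

lemma differentiableAt_coord (hφ : ∀ t, HasDerivAt φ (φ' t) t) :
    DifferentiableAt ℝ (fun y : EuclideanSpace ℝ (Fin d) => φ (y j - c)) x :=
  (hasFDerivAt_coord φ φ' c j x hφ).differentiableAt
end coord

section barrier
variable {d : ℕ} (β k : ℝ) (x₀ : EuclideanSpace ℝ (Fin d))

noncomputable def barrier (x : EuclideanSpace ℝ (Fin d)) : ℝ :=
  β * ∑ j, Real.cosh (k * (x j - x₀ j))

lemma hasDerivAt_cosh_mul (t : ℝ) :
    HasDerivAt (fun t => Real.cosh (k * t)) (k * Real.sinh (k * t)) t := by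
  have := (Real.hasDerivAt_cosh (k * t)).comp t ((hasDerivAt_id t).const_mul k)
  simpa [mul_comm, Function.comp_def] using this

lemma hasDerivAt_sinh_mul (a t : ℝ) :
    HasDerivAt (fun t => a * Real.sinh (k * t)) (a * (k * Real.cosh (k * t))) t := by
  have := ((Real.hasDerivAt_sinh (k * t)).comp t ((hasDerivAt_id t).const_mul k)).const_mul a
  simpa [mul_comm, mul_assoc, mul_left_comm] using this

lemma barrier_fderiv_apply (x : EuclideanSpace ℝ (Fin d)) (i : Fin d) :
    fderiv ℝ (barrier β k x₀) x (EuclideanSpace.single i 1)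
      = β * (k * Real.sinh (k * (x i - x₀ i))) := by
  unfold barrier
  rw [fderiv_const_mul]
  · rw [fderiv_fun_sum]
    · simp only [ContinuousLinearMap.smul_apply, ContinuousLinearMap.coe_sum',
        Finset.sum_apply]
      have : ∀ j : Fin d, fderiv ℝ (fun y : EuclideanSpace ℝ (Fin d) => Real.cosh (k * (y j - x₀ j))) x
          (EuclideanSpace.single i 1)
          = (k * Real.sinh (k * (x j - x₀ j))) * (EuclideanSpace.single i (1:ℝ)) j := fun j =>
        fderiv_coord_apply (fun t => Real.cosh (k*t)) (fun t => k * Real.sinh (k*t)) (x₀ j) j x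
          (EuclideanSpace.single i 1) (hasDerivAt_cosh_mul k)
      rw [Finset.sum_congr rfl fun j _ => this j]
      simp [EuclideanSpace.single_apply, mul_ite, Finset.sum_ite_eq, eq_comm]
    · exact fun j _ => differentiableAt_coord _ _ (x₀ j) j x (hasDerivAt_cosh_mul k)
  · exact DifferentiableAt.fun_sum fun j _ => differentiableAt_coord _ _ (x₀ j) j x (hasDerivAt_cosh_mul k)

lemma lap_barrier (x : EuclideanSpace ℝ (Fin d)) :
    lap (barrier β k x₀) x = k^2 * barrier β k x₀ x := by
  unfold lap
  have hfun : ∀ i : Fin d, (fun y => fderiv ℝ (barrier β k x₀) y (EuclideanSpace.single i 1))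
      = fun y : EuclideanSpace ℝ (Fin d) => (β * k) * Real.sinh (k * (y i - x₀ i)) := by
    intro i; funext y
    rw [barrier_fderiv_apply β k x₀ y i]; ring
  have h2 : ∀ i : Fin d, fderiv ℝ (fun y : EuclideanSpace ℝ (Fin d) => (β * k) * Real.sinh (k * (y i - x₀ i))) x
      (EuclideanSpace.single i 1) = (β * k) * (k * Real.cosh (k * (x i - x₀ i))) := by
    intro i
    have := fderiv_coord_apply (fun t => (β*k) * Real.sinh (k*t)) (fun t => (β*k) * (k * Real.cosh (k*t)))
      (x₀ i) i x (EuclideanSpace.single i 1) (hasDerivAt_sinh_mul k (β*k))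
    rw [this]
    simp [EuclideanSpace.single_apply]
  calc ∑ i : Fin d, fderiv ℝ (fun y => fderiv ℝ (barrier β k x₀) y (EuclideanSpace.single i 1)) x (EuclideanSpace.single i 1)
      = ∑ i : Fin d, (β * k) * (k * Real.cosh (k * (x i - x₀ i))) := by
        apply Finset.sum_congr rfl
        intro i _
        rw [hfun i, h2 i]
    _ = k^2 * barrier β k x₀ x := by
        unfold barrier
        rw [Finset.mul_sum, Finset.mul_sum]
        apply Finset.sum_congr rfl
        intro i _
        ring

lemma barrier_contDiff : ContDiff ℝ 2 (barrier β k x₀ : EuclideanSpace ℝ (Fin d) → ℝ) := by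
  unfold barrier
  apply ContDiff.mul contDiff_const
  apply ContDiff.sum
  intro j _
  have h1 : ContDiff ℝ 2 (fun y : EuclideanSpace ℝ (Fin d) => k * (y j - x₀ j)) :=
    (contDiff_const.mul ((by exact (EuclideanSpace.proj (𝕜 := ℝ) j).contDiff : ContDiff ℝ 2 (fun y : EuclideanSpace ℝ (Fin d) => y j)).sub contDiff_const))
  exact (Real.contDiff_cosh.of_le le_top).comp h1
end barrier


lemma diff_fderiv_apply' {d : ℕ} {f : EuclideanSpace ℝ (Fin d) → ℝ} {Ω : Set (EuclideanSpace ℝ (Fin d))}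
    (hΩ : IsOpen Ω) (hf : ContDiffOn ℝ 2 f Ω) {x : EuclideanSpace ℝ (Fin d)} (hx : x ∈ Ω)
    (v : EuclideanSpace ℝ (Fin d)) :
    DifferentiableAt ℝ (fun y => fderiv ℝ f y v) x := by
  have h1 : ContDiffOn ℝ 1 (fderiv ℝ f) Ω := hf.fderiv_of_isOpen hΩ (by norm_num)
  have h2 : DifferentiableAt ℝ (fderiv ℝ f) x :=
    (h1.differentiableOn (by norm_num)).differentiableAt (hΩ.mem_nhds hx)
  exact h2.clm_apply (differentiableAt_const v)

lemma lap_neg {d : ℕ} (f : EuclideanSpace ℝ (Fin d) → ℝ) (x : EuclideanSpace ℝ (Fin d)) :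
    lap (fun y => -f y) x = - lap f x := by
  unfold lap
  rw [← Finset.sum_neg_distrib]
  apply Finset.sum_congr rfl
  intro i _
  have h1 : (fun y => fderiv ℝ (fun z => -f z) y (EuclideanSpace.single i 1))
      = fun y => -(fderiv ℝ f y (EuclideanSpace.single i 1)) := by
    funext y; rw [fderiv_fun_neg]; simp
  rw [h1]
  have h2 : (fun y => -(fderiv ℝ f y (EuclideanSpace.single i 1)))
      = fun y => -((fun z => fderiv ℝ f z (EuclideanSpace.single i 1)) y) := rfl
  rw [h2, fderiv_fun_neg]
  simp

lemma lap_sub_const {d : ℕ} (f : EuclideanSpace ℝ (Fin d) → ℝ) (c : ℝ) (x : EuclideanSpace ℝ (Fin d)) :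
    lap (fun y => f y - c) x = lap f x := by
  unfold lap
  apply Finset.sum_congr rfl
  intro i _
  have h1 : (fun y => fderiv ℝ (fun z => f z - c) y (EuclideanSpace.single i 1))
      = fun y => fderiv ℝ f y (EuclideanSpace.single i 1) := by
    funext y; rw [fderiv_sub_const]
  rw [h1]

lemma lap_sub {d : ℕ} {f g : EuclideanSpace ℝ (Fin d) → ℝ} {Ω : Set (EuclideanSpace ℝ (Fin d))}
    (hΩ : IsOpen Ω) (hf : ContDiffOn ℝ 2 f Ω) (hg : ContDiffOn ℝ 2 g Ω)
    {x : EuclideanSpace ℝ (Fin d)} (hx : x ∈ Ω) :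
    lap (fun y => f y - g y) x = lap f x - lap g x := by
  unfold lap
  rw [← Finset.sum_sub_distrib]
  apply Finset.sum_congr rfl
  intro i _
  set v := EuclideanSpace.single i (1:ℝ) with hv
  have hev : (fun y => fderiv ℝ (fun z => f z - g z) y v)
      =ᶠ[𝓝 x] (fun y => fderiv ℝ f y v - fderiv ℝ g y v) := by
    filter_upwards [hΩ.mem_nhds hx] with y hy
    have hfy : DifferentiableAt ℝ f y :=
      (hf.differentiableOn (by norm_num)).differentiableAt (hΩ.mem_nhds hy)
    have hgy : DifferentiableAt ℝ g y :=
      (hg.differentiableOn (by norm_num)).differentiableAt (hΩ.mem_nhds hy)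
    rw [fderiv_fun_sub hfy hgy]
    simp
  rw [hev.fderiv_eq, fderiv_fun_sub (diff_fderiv_apply' hΩ hf hx v) (diff_fderiv_apply' hΩ hg hx v)]
  simp

lemma cube_comparison {d : ℕ} (hd : 0 < d) {Ω : Set (EuclideanSpace ℝ (Fin d))} (hΩ : IsOpen Ω)
    {p : EuclideanSpace ℝ (Fin d) → ℝ} (hp : ContDiffOn ℝ 2 p Ω)
    {ε m₀ m M r : ℝ} (hε : 0 < ε) (hm₀ : 0 < m₀) (hm : m₀ ≤ m) (hM : 0 < M) (hr : 0 < r)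
    (x₀ : EuclideanSpace ℝ (Fin d))
    (hcube : {x : EuclideanSpace ℝ (Fin d) | ∀ i, |x i - x₀ i| ≤ r} ⊆ Ω)
    (hbound : ∀ x ∈ {x : EuclideanSpace ℝ (Fin d) | ∀ i, |x i - x₀ i| ≤ r}, p x ≤ M)
    (hpde : ∀ x ∈ Ω, ε * lap p x = 2 * m * Real.sinh (p x)) :
    p x₀ ≤ (M / Real.cosh (Real.sqrt (2*m₀/ε) * r)) * d := by
  set k : ℝ := Real.sqrt (2*m₀/ε) with hkdef
  have hknn : 0 ≤ k := Real.sqrt_nonneg _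
  have hk2 : k^2 = 2*m₀/ε := Real.sq_sqrt (by positivity)
  set β : ℝ := M / Real.cosh (k * r) with hβdef
  have hcoshpos : 0 < Real.cosh (k * r) := Real.cosh_pos (k*r)
  have hβpos : 0 < β := div_pos hM hcoshpos
  set w : EuclideanSpace ℝ (Fin d) → ℝ := barrier β k x₀ with hwdef
  set C : Set (EuclideanSpace ℝ (Fin d)) := {x | ∀ i, |x i - x₀ i| ≤ r} with hCdef
  have hx₀C : x₀ ∈ C := fun i => by simp [le_of_lt hr]
  -- C is compact
  have hCclosed : IsClosed C := by
    have : C = ⋂ i, {x : EuclideanSpace ℝ (Fin d) | |x i - x₀ i| ≤ r} := by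
      ext x; simp [hCdef]
    rw [this]
    exact isClosed_iInter fun i => isClosed_le (by
      exact (continuous_abs.comp (((EuclideanSpace.proj (𝕜 := ℝ) i).continuous).sub continuous_const))) continuous_const
  have hCsubball : C ⊆ Metric.closedBall x₀ ((d+1)*r) := by
    intro x hx
    rw [Metric.mem_closedBall, EuclideanSpace.dist_eq]
    have hbd : ∑ i, dist (x i) (x₀ i)^2 ≤ ((d+1)*r)^2 := by
      calc ∑ i, dist (x i) (x₀ i)^2 ≤ ∑ _i : Fin d, r^2 := by
            apply Finset.sum_le_sum
            intro i _
            have := hx i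
            rw [Real.dist_eq]
            nlinarith [abs_nonneg (x i - x₀ i)]
        _ = d * r^2 := by simp [mul_comm]
        _ ≤ ((d+1)*r)^2 := by nlinarith [hr.le, Nat.cast_nonneg (α := ℝ) d]
    calc Real.sqrt (∑ i, dist (x i) (x₀ i)^2) ≤ Real.sqrt (((d+1)*r)^2) := Real.sqrt_le_sqrt hbd
      _ = (d+1)*r := Real.sqrt_sq (by positivity)
  have hCcomp : IsCompact C :=
    (isCompact_closedBall x₀ _).of_isClosed_subset hCclosed hCsubball
  -- w basics
  have hwcont : Continuous w := (barrier_contDiff β k x₀).continuous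
  have hwpos : ∀ x, 0 < w x := by
    intro x
    have h1 : (d:ℝ) ≤ ∑ j : Fin d, Real.cosh (k * (x j - x₀ j)) := by
      calc (d:ℝ) = ∑ _j : Fin d, (1:ℝ) := by simp
        _ ≤ _ := Finset.sum_le_sum fun j _ => Real.one_le_cosh _
    have hd' : (0:ℝ) < d := by exact_mod_cast hd
    have : 0 < ∑ j : Fin d, Real.cosh (k * (x j - x₀ j)) := lt_of_lt_of_le hd' h1
    exact mul_pos hβpos this
  have hwx₀ : w x₀ = β * d := by
    simp [hwdef, barrier]
  -- max of p - w on C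
  have hpcont : ContinuousOn (fun x => p x - w x) C :=
    ((hp.continuousOn).mono hcube).sub hwcont.continuousOn
  obtain ⟨z, hzC, hzmax⟩ := hCcomp.exists_isMaxOn ⟨x₀, hx₀C⟩ hpcont
  by_cases hvz : p z - w z ≤ 0
  · have := hzmax hx₀C
    simp only at this
    have : p x₀ - w x₀ ≤ 0 := le_trans this hvz
    rw [hwx₀] at this
    rw [hβdef] at this
    linarith
  · exfalso
    push_neg at hvz
    -- z is in the open cube
    have hzin : ∀ i, |z i - x₀ i| < r := by
      intro i
      rcases lt_or_eq_of_le (hzC i) with h | h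
      · exact h
      · exfalso
        have hterm : Real.cosh (k * (z i - x₀ i)) = Real.cosh (k * r) := by
          rw [← Real.cosh_abs, abs_mul, abs_of_nonneg hknn, h]
        have hge : Real.cosh (k*r) ≤ ∑ j : Fin d, Real.cosh (k * (z j - x₀ j)) := by
          rw [← hterm]
          exact Finset.single_le_sum (f := fun j => Real.cosh (k * (z j - x₀ j)))
            (fun j _ => (Real.cosh_pos _).le) (Finset.mem_univ i)
        have hwz : M ≤ w z := by
          have : β * Real.cosh (k*r) ≤ β * ∑ j : Fin d, Real.cosh (k * (z j - x₀ j)) :=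
            mul_le_mul_of_nonneg_left hge hβpos.le
          rw [hβdef] at this
          rw [div_mul_cancel₀ _ hcoshpos.ne'] at this
          exact le_trans (le_of_eq rfl) this
        have := hbound z hzC
        linarith
    -- local max
    have hO : IsOpen {x : EuclideanSpace ℝ (Fin d) | ∀ i, |x i - x₀ i| < r} := by
      have : {x : EuclideanSpace ℝ (Fin d) | ∀ i, |x i - x₀ i| < r}
          = ⋂ i, {x : EuclideanSpace ℝ (Fin d) | |x i - x₀ i| < r} := by ext x; simp
      rw [this]
      exact isOpen_iInter_of_finite fun i => isOpen_lt (by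
        exact (continuous_abs.comp (((EuclideanSpace.proj (𝕜 := ℝ) i).continuous).sub continuous_const))) continuous_const
    have hOsubC : {x : EuclideanSpace ℝ (Fin d) | ∀ i, |x i - x₀ i| < r} ⊆ C :=
      fun x hx i => (hx i).le
    have hCnhds : C ∈ 𝓝 z :=
      Filter.mem_of_superset (hO.mem_nhds hzin) hOsubC
    have hlocmax : IsLocalMax (fun x => p x - w x) z := hzmax.isLocalMax hCnhds
    have hzΩ : z ∈ Ω := hcube hzC
    have hvC2 : ContDiffOn ℝ 2 (fun x => p x - w x) Ω :=
      hp.sub (barrier_contDiff β k x₀).contDiffOn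
    have hlapv : lap (fun x => p x - w x) z ≤ 0 :=
      lap_nonpos_at_localMax hΩ hvC2 hzΩ hlocmax
    rw [lap_sub hΩ hp (barrier_contDiff β k x₀).contDiffOn hzΩ] at hlapv
    have hlapw : lap w z = k^2 * w z := lap_barrier β k x₀ z
    have h1 : ε * lap p z ≤ ε * (k^2 * w z) := by
      have : lap p z ≤ k^2 * w z := by rw [← hlapw]; linarith
      exact mul_le_mul_of_nonneg_left this hε.le
    have h2 : ε * (k^2 * w z) = 2*m₀ * w z := by
      rw [hk2]; field_simp
    have hpz : 0 < p z := lt_trans (hwpos z) (by linarith)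
    have hsinh : p z < Real.sinh (p z) := Real.self_lt_sinh_iff.2 hpz
    have h3 : 2 * m₀ * w z < 2 * m * Real.sinh (p z) := by
      have hwp : w z < p z := by linarith
      have hA : 2 * m₀ * w z < 2 * m₀ * p z :=
        mul_lt_mul_of_pos_left hwp (by linarith)
      have hB : 2 * m₀ * p z ≤ 2 * m * p z :=
        mul_le_mul_of_nonneg_right (by linarith) hpz.le
      have hC2 : 2 * m * p z < 2 * m * Real.sinh (p z) :=
        mul_lt_mul_of_pos_left hsinh (by linarith)
      linarith
    have hpdez := hpde z hzΩ
    linarith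

set_option maxHeartbeats 1000000 in
/-- Asymptotic electroneutrality of Poisson–Boltzmann equilibria when the anions have a
uniform selective boundary condition and the cations have blocking boundary conditions:
for every compact `K ⊆ Ω`, `sup_{x ∈ K} |ρ_ε(x)| → 0` as `ε → 0⁺`. -/
theorem interior_electroneutrality_selective_anion_blocking_cation
    {d : ℕ} (hd : d = 2 ∨ d = 3)
    (Ω : Set (EuclideanSpace ℝ (Fin d)))
    (hΩopen : IsOpen Ω) (hΩne : Ω.Nonempty) (hΩbdd : Bornology.IsBounded Ω)
    (hΩconn : IsConnected Ω)
    (W : EuclideanSpace ℝ (Fin d) → ℝ) (hWsmooth : ContDiff ℝ (⊤ : ℕ∞) W)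
    (hWbdd : ∃ C, ∀ x, |W x| ≤ C)
    (Z₂ I₁ : ℝ) (hZ₂ : 0 < Z₂) (hI₁ : 0 < I₁)
    (Φ : ℝ → EuclideanSpace ℝ (Fin d) → ℝ)
    (hΦC2 : ∀ ε > (0:ℝ), ContDiffOn ℝ 2 (Φ ε) Ω)
    (hΦC1 : ∀ ε > (0:ℝ), ContDiffOn ℝ 1 (Φ ε) (closure Ω))
    (hPB : ∀ ε > (0:ℝ), ∀ x ∈ Ω,
      -ε * lap (Φ ε) x
        = I₁ * exp (-(Φ ε x)) / (∫ y in Ω, exp (-(Φ ε y))) - exp (Φ ε x) / Z₂)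
    (hbc : ∀ ε > (0:ℝ), ∀ x ∈ frontier Ω, Φ ε x = W x)
    (ρ : ℝ → EuclideanSpace ℝ (Fin d) → ℝ)
    (hρ : ∀ ε x, ρ ε x
      = I₁ * exp (-(Φ ε x)) / (∫ y in Ω, exp (-(Φ ε y))) - exp (Φ ε x) / Z₂)
    (K : Set (EuclideanSpace ℝ (Fin d))) (hK : IsCompact K) (hKΩ : K ⊆ Ω) :
    Tendsto (fun ε => ⨆ x ∈ K, |ρ ε x|) (𝓝[>] (0:ℝ)) (𝓝 0) := by
  classical
  obtain ⟨Cw0, hCw0⟩ := hWbdd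
  set Cw : ℝ := max Cw0 0 with hCwdef
  have hCw : ∀ x, |W x| ≤ Cw := fun x => le_trans (hCw0 x) (le_max_left _ _)
  have hCwnn : (0:ℝ) ≤ Cw := le_max_right _ _
  have hd1 : 0 < d := by rcases hd with h | h <;> omega
  -- volume of Ω
  have hvolfin : volume Ω < ⊤ :=
    lt_of_le_of_lt (measure_mono subset_closure) hΩbdd.isCompact_closure.measure_lt_top
  set vol : ℝ := (volume Ω).toReal with hvoldef
  have hvolpos : 0 < vol :=
    ENNReal.toReal_pos (hΩopen.measure_pos volume hΩne).ne' hvolfin.ne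
  set B : ℝ := I₁ * Z₂ / vol with hBdef
  have hBpos : 0 < B := by positivity
  set cplus : ℝ := max Cw (Real.log B) with hcplusdef
  set cminus : ℝ := min (-Cw) (Real.log B) with hcminusdef
  have hcpm : cminus ≤ cplus := le_trans (min_le_right _ _) (le_max_right _ _)
  set U : ℝ := max Cw (max |cplus| |cminus|) with hUdef
  have hUnn : 0 ≤ U := le_trans hCwnn (le_max_left _ _)
  have hcplusU : cplus ≤ U := le_trans (le_abs_self _) (le_trans (le_max_left _ _) (le_max_right _ _))
  have hcminusU : -U ≤ cminus := by
    have : |cminus| ≤ U := le_trans (le_max_right _ _) (le_max_right _ _)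
    have := neg_abs_le cminus
    linarith
  set M : ℝ := 2*U + 1 with hMdef
  have hMpos : 0 < M := by linarith
  set m₀ : ℝ := Real.exp (-U) / Z₂ with hm₀def
  set m₁ : ℝ := Real.exp U / Z₂ with hm₁def
  have hm₀pos : 0 < m₀ := by positivity
  have hm₁pos : 0 < m₁ := by positivity
  -- geometry: cubes around points of K stay in Ω
  obtain ⟨δ, hδpos, hδ⟩ := hK.exists_thickening_subset_open hΩopen hKΩ
  set r : ℝ := δ / (2*(d+1)) with hrdef
  have hrpos : 0 < r := by positivity
  have hcubesub : ∀ x₀ ∈ K, {x : EuclideanSpace ℝ (Fin d) | ∀ i, |x i - x₀ i| ≤ r} ⊆ Ω := by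
    intro x₀ hx₀ x hx
    apply hδ
    rw [Metric.mem_thickening_iff]
    refine ⟨x₀, hx₀, ?_⟩
    have hdle : dist x x₀ ≤ (d+1)*r := by
      rw [EuclideanSpace.dist_eq]
      have hbd : ∑ i, dist (x i) (x₀ i)^2 ≤ ((d+1)*r)^2 := by
        calc ∑ i, dist (x i) (x₀ i)^2 ≤ ∑ _i : Fin d, r^2 := by
              apply Finset.sum_le_sum
              intro i _
              have := hx i
              rw [Real.dist_eq]
              nlinarith [abs_nonneg (x i - x₀ i)]
          _ = d * r^2 := by simp [mul_comm]
          _ ≤ ((d+1)*r)^2 := by nlinarith [hrpos.le, Nat.cast_nonneg (α := ℝ) d]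
      calc Real.sqrt (∑ i, dist (x i) (x₀ i)^2) ≤ Real.sqrt (((d+1)*r)^2) := Real.sqrt_le_sqrt hbd
        _ = (d+1)*r := Real.sqrt_sq (by positivity)
    have hEq : ((d:ℝ)+1)*r = δ/2 := by
      rw [hrdef]
      have hne : ((d:ℝ)+1) ≠ 0 := by positivity
      field_simp
    linarith
  -- the uniform bound function
  set bfun : ℝ → ℝ := fun ε =>
    2 * m₁ * Real.sinh ((M / Real.cosh (Real.sqrt (2*m₀/ε) * r)) * d) with hbfundef
  have hbfun_nonneg : ∀ ε, 0 ≤ bfun ε := by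
    intro ε
    have h1 : 0 ≤ (M / Real.cosh (Real.sqrt (2*m₀/ε) * r)) * d := by positivity
    have := Real.sinh_nonneg_iff.2 h1
    positivity
  -- the key pointwise estimate
  have key : ∀ ε ∈ Ioi (0:ℝ), ∀ x₀ ∈ K, |ρ ε x₀| ≤ bfun ε := by
    intro ε hε x₀ hx₀
    have hεpos : (0:ℝ) < ε := hε
    set u := Φ ε with hudef
    have hu2 : ContDiffOn ℝ 2 u Ω := hΦC2 ε hεpos
    have hu1c : ContinuousOn u (closure Ω) := (hΦC1 ε hεpos).continuousOn
    have hclcomp : IsCompact (closure Ω) := hΩbdd.isCompact_closure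
    have hclne : (closure Ω).Nonempty := hΩne.closure
    -- integral S
    have hcontexp : ContinuousOn (fun y => Real.exp (-(u y))) (closure Ω) :=
      Real.continuous_exp.comp_continuousOn hu1c.neg
    have hint : MeasureTheory.IntegrableOn (fun y => Real.exp (-(u y))) Ω volume :=
      (hcontexp.integrableOn_compact hclcomp).mono_set subset_closure
    set S : ℝ := ∫ y in Ω, Real.exp (-(u y)) with hSdef
    have hSpos : 0 < S := by
      rw [hSdef]
      rw [setIntegral_pos_iff_support_of_nonneg_ae]
      · have : (Function.support fun y => Real.exp (-(u y))) = univ := by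
          ext y; simp [Function.mem_support, (Real.exp_pos _).ne']
        rw [this, Set.univ_inter]
        exact hΩopen.measure_pos volume hΩne
      · filter_upwards with y using (Real.exp_pos _).le
      · exact hint
    set A : ℝ := I₁ / S with hAdef
    have hApos : 0 < A := by positivity
    set c : ℝ := Real.log (A * Z₂) / 2 with hcdef
    have hexp2c : Real.exp (2*c) = A * Z₂ := by
      rw [hcdef]
      rw [show 2 * (Real.log (A * Z₂) / 2) = Real.log (A * Z₂) by ring]
      exact Real.exp_log (by positivity)
    set m : ℝ := Real.exp c / Z₂ with hmdef
    have hmpos : 0 < m := by positivity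
    -- ρ in sinh form
    have hρform : ∀ x, ρ ε x = -(2 * m * Real.sinh (u x - c)) := by
      intro x
      have hSx : (∫ y in Ω, Real.exp (-(Φ ε y))) = S := by rw [hSdef]
      rw [hρ, hSx, ← hudef]
      have hstep : I₁ * Real.exp (-(u x)) / S = A * Real.exp (-(u x)) := by
        rw [hAdef]; ring
      rw [hstep]
      have hA2 : A = Real.exp c * Real.exp c / Z₂ := by
        rw [eq_div_iff hZ₂.ne']
        rw [← hexp2c, ← Real.exp_add]
        ring_nf
      have hX : Real.exp (-(u x)) = (Real.exp (u x))⁻¹ := Real.exp_neg _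
      have h1 : Real.exp (u x - c) = Real.exp (u x) / Real.exp c := Real.exp_sub _ _
      have h2 : Real.exp (-(u x - c)) = Real.exp c / Real.exp (u x) := by
        rw [show -(u x - c) = c - u x by ring, Real.exp_sub]
      rw [Real.sinh_eq, hmdef, hA2, hX, h1, h2]
      have hEpos := Real.exp_pos c
      have hXpos := Real.exp_pos (u x)
      field_simp
      ring
    -- PDE in sinh form
    have hpde' : ∀ x ∈ Ω, ε * lap u x = 2 * m * Real.sinh (u x - c) := by
      intro x hx
      have h1 := hPB ε hεpos x hx
      rw [← hρ ε x, hρform x] at h1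
      have : -ε * lap u x = -(2 * m * Real.sinh (u x - c)) := h1
      linarith
    -- maximum principle
    have hmaxprin : ∀ x ∈ closure Ω, u x ≤ max Cw c := by
      obtain ⟨z, hzcl, hzmax⟩ := hclcomp.exists_isMaxOn hclne hu1c
      intro x hx
      refine le_trans (hzmax hx) ?_
      by_cases hzΩ : z ∈ Ω
      · have hloc : IsLocalMax u z :=
          hzmax.isLocalMax (Filter.mem_of_superset (hΩopen.mem_nhds hzΩ) subset_closure)
        have hlap : lap u z ≤ 0 := lap_nonpos_at_localMax hΩopen hu2 hzΩ hloc
        have hp := hpde' z hzΩ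
        have hs : Real.sinh (u z - c) ≤ 0 := by nlinarith
        have : u z - c ≤ 0 := Real.sinh_nonpos_iff.1 hs
        exact le_max_of_le_right (by linarith)
      · have hzfr : z ∈ frontier Ω := by
          rw [frontier, hΩopen.interior_eq]; exact ⟨hzcl, hzΩ⟩
        have hW := hbc ε hεpos z hzfr
        have : u z ≤ Cw := by
          rw [hudef, hW]
          exact le_trans (le_abs_self _) (hCw z)
        exact le_max_of_le_left this
    have hminprin : ∀ x ∈ closure Ω, min (-Cw) c ≤ u x := by
      obtain ⟨z, hzcl, hzmin⟩ := hclcomp.exists_isMinOn hclne hu1c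
      intro x hx
      refine le_trans ?_ (hzmin hx)
      by_cases hzΩ : z ∈ Ω
      · have hloc : IsLocalMin u z :=
          hzmin.isLocalMin (Filter.mem_of_superset (hΩopen.mem_nhds hzΩ) subset_closure)
        have hlapneg : lap (fun y => -u y) z ≤ 0 :=
          lap_nonpos_at_localMax hΩopen hu2.neg hzΩ hloc.neg
        rw [lap_neg] at hlapneg
        have hlap : 0 ≤ lap u z := by linarith
        have hp := hpde' z hzΩ
        have hs : 0 ≤ Real.sinh (u z - c) := by nlinarith
        have : 0 ≤ u z - c := Real.sinh_nonneg_iff.1 hs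
        exact min_le_of_right_le (by linarith)
      · have hzfr : z ∈ frontier Ω := by
          rw [frontier, hΩopen.interior_eq]; exact ⟨hzcl, hzΩ⟩
        have hW := hbc ε hεpos z hzfr
        have : -Cw ≤ u z := by
          rw [hudef, hW]
          have := hCw z
          have := neg_abs_le (W z)
          linarith
        exact min_le_of_left_le this
    -- bounds on S
    have hconst_int : MeasureTheory.IntegrableOn
        (fun _ : EuclideanSpace ℝ (Fin d) => Real.exp (-(min (-Cw) c))) Ω volume := by
      exact MeasureTheory.integrableOn_const hvolfin.ne
    have hconst_int2 : MeasureTheory.IntegrableOn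
        (fun _ : EuclideanSpace ℝ (Fin d) => Real.exp (-(max Cw c))) Ω volume := by
      exact MeasureTheory.integrableOn_const hvolfin.ne
    have hSuB : S ≤ vol * Real.exp (-(min (-Cw) c)) := by
      have h1 : S ≤ ∫ _y in Ω, Real.exp (-(min (-Cw) c)) := by
        rw [hSdef]
        apply setIntegral_mono_on hint hconst_int hΩopen.measurableSet
        intro y hy
        exact Real.exp_le_exp.2 (neg_le_neg (hminprin y (subset_closure hy)))
      rw [setIntegral_const] at h1
      simpa [hvoldef, smul_eq_mul, measureReal_def] using h1
    have hSlB : vol * Real.exp (-(max Cw c)) ≤ S := by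
      have h1 : (∫ _y in Ω, Real.exp (-(max Cw c))) ≤ S := by
        rw [hSdef]
        apply setIntegral_mono_on hconst_int2 hint hΩopen.measurableSet
        intro y hy
        exact Real.exp_le_exp.2 (neg_le_neg (hmaxprin y (subset_closure hy)))
      rw [setIntegral_const] at h1
      simpa [hvoldef, smul_eq_mul, measureReal_def] using h1
    -- bounds on c
    have hexp2c' : Real.exp (2*c) = I₁ * Z₂ / S := by
      rw [hexp2c, hAdef]; ring
    have hc_up : c ≤ cplus := by
      rcases le_or_gt c Cw with h | h
      · exact le_trans h (le_max_left _ _)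
      · have hmaxc : max Cw c = c := max_eq_right h.le
        rw [hmaxc] at hSlB
        have hden : 0 < vol * Real.exp (-c) := by positivity
        have h1 : Real.exp (2*c) ≤ B * Real.exp c := by
          rw [hexp2c']
          calc I₁ * Z₂ / S ≤ I₁ * Z₂ / (vol * Real.exp (-c)) := by
                gcongr
            _ = B * Real.exp c := by
                rw [hBdef, Real.exp_neg]
                field_simp
        have h2 : Real.exp c ≤ B := by
          rw [show 2*c = c + c by ring, Real.exp_add] at h1
          exact le_of_mul_le_mul_right (by linarith [h1]) (Real.exp_pos c)
        have h3 : c ≤ Real.log B := (Real.le_log_iff_exp_le hBpos).2 h2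
        exact le_trans h3 (le_max_right _ _)
    have hc_lo : cminus ≤ c := by
      rcases le_or_gt (-Cw) c with h | h
      · exact le_trans (min_le_left _ _) h
      · have hminc : min (-Cw) c = c := min_eq_right h.le
        rw [hminc] at hSuB
        have hden : 0 < vol * Real.exp (-c) := by positivity
        have h1 : B * Real.exp c ≤ Real.exp (2*c) := by
          rw [hexp2c']
          calc B * Real.exp c = I₁ * Z₂ / (vol * Real.exp (-c)) := by
                rw [hBdef, Real.exp_neg]
                field_simp
            _ ≤ I₁ * Z₂ / S := by
                gcongr
        have h2 : B ≤ Real.exp c := by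
          rw [show 2*c = c + c by ring, Real.exp_add] at h1
          exact le_of_mul_le_mul_right (by linarith [h1]) (Real.exp_pos c)
        exact le_trans (min_le_right _ _) ((Real.log_le_iff_le_exp hBpos).2 h2)
    -- uniform bounds
    have hcU : |c| ≤ U := by
      rw [abs_le]
      constructor
      · linarith [hcminusU, hc_lo]
      · linarith [hcplusU, hc_up]
    have hCwU : Cw ≤ U := le_max_left _ _
    have hψ_ub : ∀ x ∈ closure Ω, u x - c ≤ M := by
      intro x hx
      have h1 := hmaxprin x hx
      have h2 : max Cw c ≤ U := max_le hCwU (le_trans (le_abs_self c) hcU)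
      have h3 : -U ≤ c := by
        have := abs_le.1 hcU
        linarith [this.1]
      rw [hMdef]
      linarith
    have hψ_lb : ∀ x ∈ closure Ω, c - u x ≤ M := by
      intro x hx
      have h1 := hminprin x hx
      have h2 : -U ≤ min (-Cw) c := le_min (by linarith) (by
        have := abs_le.1 hcU
        linarith [this.1])
      have h3 : c ≤ U := le_trans (le_abs_self c) hcU
      rw [hMdef]
      linarith
    have hm₀m : m₀ ≤ m := by
      rw [hm₀def, hmdef]
      have h1 : Real.exp (-U) ≤ Real.exp c := Real.exp_le_exp.2 (by
        have := abs_le.1 hcU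
        linarith [this.1])
      gcongr
    have hmm₁ : m ≤ m₁ := by
      rw [hm₁def, hmdef]
      have h1 : Real.exp c ≤ Real.exp U := Real.exp_le_exp.2 (le_trans (le_abs_self c) hcU)
      gcongr
    -- cube comparison at x₀
    have hcube := hcubesub x₀ hx₀
    set bd : ℝ := (M / Real.cosh (Real.sqrt (2*m₀/ε) * r)) * d with hbddef
    have hplus : u x₀ - c ≤ bd := by
      have hψC2 : ContDiffOn ℝ 2 (fun y => u y - c) Ω := hu2.sub contDiffOn_const
      have hψbound : ∀ x ∈ {x : EuclideanSpace ℝ (Fin d) | ∀ i, |x i - x₀ i| ≤ r},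
          (fun y => u y - c) x ≤ M := fun x hx => hψ_ub x (subset_closure (hcube hx))
      have hpdeψ : ∀ x ∈ Ω, ε * lap (fun y => u y - c) x
          = 2 * m * Real.sinh ((fun y => u y - c) x) := by
        intro x hx
        rw [lap_sub_const]
        exact hpde' x hx
      exact cube_comparison hd1 hΩopen hψC2 hεpos hm₀pos hm₀m hMpos hrpos x₀ hcube hψbound hpdeψ
    have hminus : c - u x₀ ≤ bd := by
      have hφC2 : ContDiffOn ℝ 2 (fun y => c - u y) Ω := contDiffOn_const.sub hu2
      have hφbound : ∀ x ∈ {x : EuclideanSpace ℝ (Fin d) | ∀ i, |x i - x₀ i| ≤ r},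
          (fun y => c - u y) x ≤ M := fun x hx => hψ_lb x (subset_closure (hcube hx))
      have hpdeφ : ∀ x ∈ Ω, ε * lap (fun y => c - u y) x
          = 2 * m * Real.sinh ((fun y => c - u y) x) := by
        intro x hx
        have hfun : (fun y => c - u y) = (fun y => -((fun z => u z - c) y)) := by
          funext y; ring
        rw [hfun, lap_neg, lap_sub_const]
        have h1 := hpde' x hx
        have h2 : Real.sinh (-(u x - c)) = -Real.sinh (u x - c) := Real.sinh_neg _
        simp only []
        rw [h2]
        linarith
      exact cube_comparison hd1 hΩopen hφC2 hεpos hm₀pos hm₀m hMpos hrpos x₀ hcube hφbound hpdeφ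
    have habs : |u x₀ - c| ≤ bd := abs_le.2 ⟨by linarith, hplus⟩
    have hbd_nonneg : 0 ≤ bd := le_trans (abs_nonneg _) habs
    -- conclude
    rw [hρform x₀, abs_neg, abs_mul, abs_of_nonneg (by positivity : (0:ℝ) ≤ 2*m), Real.abs_sinh]
    have h1 : Real.sinh |u x₀ - c| ≤ Real.sinh bd := Real.sinh_le_sinh.2 habs
    have h2 : 0 ≤ Real.sinh bd := Real.sinh_nonneg_iff.2 hbd_nonneg
    calc 2*m * Real.sinh |u x₀ - c| ≤ 2*m * Real.sinh bd := by
          exact mul_le_mul_of_nonneg_left h1 (by positivity)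
      _ ≤ 2*m₁ * Real.sinh bd := by
          apply mul_le_mul_of_nonneg_right _ h2
          linarith
      _ = bfun ε := by rw [hbfundef, hbddef]
  -- sup bounds
  have hsup_le : ∀ ε ∈ Ioi (0:ℝ), (⨆ x ∈ K, |ρ ε x|) ≤ bfun ε := by
    intro ε hε
    apply Real.iSup_le _ (hbfun_nonneg ε)
    intro x
    apply Real.iSup_le _ (hbfun_nonneg ε)
    intro hx
    exact key ε hε x hx
  have hsup_nonneg : ∀ ε : ℝ, 0 ≤ ⨆ x ∈ K, |ρ ε x| :=
    fun ε => Real.iSup_nonneg fun x => Real.iSup_nonneg fun _ => abs_nonneg _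
  -- the bound tends to 0
  have hsqrt_top : Tendsto Real.sqrt atTop atTop := by
    apply tendsto_atTop_atTop.2
    intro b
    refine ⟨(max b 0)^2, fun a ha => ?_⟩
    have h1 : Real.sqrt ((max b 0)^2) ≤ Real.sqrt a := Real.sqrt_le_sqrt ha
    rw [Real.sqrt_sq (le_max_right b 0)] at h1
    exact le_trans (le_max_left b 0) h1
  have hcosh_top : Tendsto Real.cosh atTop atTop := by
    apply tendsto_atTop_mono (fun x => ?_)
      ((Real.tendsto_exp_atTop).atTop_div_const (by norm_num : (0:ℝ) < 2))
    rw [Real.cosh_eq]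
    have := (Real.exp_pos (-x)).le
    linarith
  have harg : Tendsto (fun ε : ℝ => Real.sqrt (2*m₀/ε) * r) (𝓝[>] (0:ℝ)) atTop := by
    apply Tendsto.atTop_mul_const hrpos
    apply hsqrt_top.comp
    have h2 := (tendsto_inv_nhdsGT_zero (𝕜 := ℝ)).const_mul_atTop
      (show (0:ℝ) < 2*m₀ by positivity)
    exact h2.congr fun x => (div_eq_mul_inv _ _).symm
  have hbd0 : Tendsto (fun ε : ℝ => (M / Real.cosh (Real.sqrt (2*m₀/ε) * r)) * d)
      (𝓝[>] (0:ℝ)) (𝓝 0) := by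
    have h1 : Tendsto (fun ε : ℝ => M / Real.cosh (Real.sqrt (2*m₀/ε) * r))
        (𝓝[>] (0:ℝ)) (𝓝 0) :=
      tendsto_const_nhds.div_atTop (hcosh_top.comp harg)
    have := h1.mul_const (d:ℝ)
    simpa using this
  have hbtend : Tendsto bfun (𝓝[>] (0:ℝ)) (𝓝 0) := by
    have h2 := (Real.continuous_sinh.tendsto 0).comp hbd0
    rw [Real.sinh_zero] at h2
    have h3 := h2.const_mul (2*m₁)
    simpa [hbfundef, Function.comp] using h3
  apply tendsto_of_tendsto_of_tendsto_of_le_of_le' tendsto_const_nhds hbtend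
  · filter_upwards [self_mem_nhdsWithin] with ε hε using hsup_nonneg ε
  · filter_upwards [self_mem_nhdsWithin] with ε hε using hsup_le ε hε
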